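/- arXiv:2304.06574 — 8 statements merged into one kernel-verified Lean document; each statement's English description precedes it below -/
import Mathlib

section
/- Under the hypotheses of the previous decision-boundary identity, if p = 1/2 then (1-ε(1,2)-ε(2,1))(α₁ - α₂) = 2a₁ - 2p'(a₁+a₂) = 2(1-p')a₁ - 2p'a₂. In particular, since 1-ε(1,2)-ε(2,1) > 0, α₁ ≥ α₂ if and only if (1-p')a₁ ≥ p'a₂, a condition not depending on the noise rates ε(1,2), ε(2,1). -/
theorem balanced_decision_boundary
    (e12 e21 : ℝ) (he12 : 0 ≤ e12) (he12' : e12 < 1) (he21 : 0 ≤ e21) (he21' : e21 < 1)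
    (hsum : e12 + e21 < 1)
    (p p' : ℝ) (hp : p = 1/2) (hp'0 : 0 < p') (hp'1 : p' < 1)
    (hpp' : p' = p * (1 - e21) + (1 - p) * e12)
    (α1 α2 a1 a2 : ℝ)
    (ha1 : a1 = (1 - e21) * α1 + e12 * α2)
    (ha2 : a2 = e21 * α1 + (1 - e12) * α2) :
    (1 - e12 - e21) * (α1 - α2) = 2 * a1 - 2 * p' * (a1 + a2) ∧
    (1 - e12 - e21) * (α1 - α2) = 2 * (1 - p') * a1 - 2 * p' * a2 ∧
    0 < 1 - e12 - e21 ∧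
    (α1 ≥ α2 ↔ (1 - p') * a1 ≥ p' * a2) := by
  subst hp hpp' ha1 ha2
  have hpos : 0 < 1 - e12 - e21 := by linarith
  refine ⟨by ring, by ring, hpos, ?_⟩
  constructor
  · intro h; nlinarith
  · intro h; nlinarith
end

section
/- Let p ≠ 1/2 and p' ∈ (0,1) be given with suitable noise rates existing. Then there exist two pairs of noise rates (ε(1,2), ε(2,1)) and (ε̃(1,2), ε̃(2,1)), each with nonnegative entries summing (pairwise) to less than 1 and each consistent with p' = p(1-ε(2,1)) + (1-p)ε(1,2), and nonnegative numbers a₁, a₂, such that the corresponding clean densities α and α̃ obtained by inverting the noise transition satisfy α₁ > α₂ but α̃₁ < α̃₂. -/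
lemma noniden_helper (e12 e21 f12 f21 : ℝ)
    (he1 : 0 ≤ e12) (he2 : 0 ≤ e21) (hes : e12 + e21 < 1)
    (hf1 : 0 ≤ f12) (hf2 : 0 ≤ f21) (hfs : f12 + f21 < 1)
    (hd : e12 - e21 < f12 - f21) :
    ∃ a1 a2 : ℝ, 0 ≤ a1 ∧ 0 ≤ a2 ∧
      ((1 - e12) * a1 - e12 * a2) / (1 - e12 - e21)
        > (-e21 * a1 + (1 - e21) * a2) / (1 - e12 - e21) ∧
      ((1 - f12) * a1 - f12 * a2) / (1 - f12 - f21)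
        < (-f21 * a1 + (1 - f21) * a2) / (1 - f12 - f21) := by
  set d := e12 - e21 with hdd
  set d' := f12 - f21 with hdd'
  have hd1 : 1 - d > 0 := by simp [hdd]; linarith
  have hd1' : 1 - d' > 0 := by simp [hdd']; linarith
  have hd2 : 1 + d > 0 := by simp [hdd]; linarith
  have hd2' : 1 + d' > 0 := by simp [hdd']; linarith
  refine ⟨(1+d)*(1-d') + (1+d')*(1-d), 2*(1-d)*(1-d'), by positivity, by positivity, ?_, ?_⟩
  · have hD : (0:ℝ) < 1 - e12 - e21 := by linarith
    apply div_lt_div_of_pos_right _ hD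
    nlinarith [mul_pos hd1 (sub_pos.mpr hd)]
  · have hD : (0:ℝ) < 1 - f12 - f21 := by linarith
    apply div_lt_div_of_pos_right _ hD
    nlinarith [mul_pos hd1' (sub_pos.mpr hd)]

theorem nonidentifiability_imbalanced_binary
    (p p' : ℝ) (hp0 : 0 < p) (hp1 : p < 1) (hpne : p ≠ 1/2)
    (hp'0 : 0 < p') (hp'1 : p' < 1)
    (hex : ∃ e12 e21 : ℝ, 0 ≤ e12 ∧ 0 ≤ e21 ∧ e12 + e21 < 1 ∧
      p' = p * (1 - e21) + (1 - p) * e12) :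
    ∃ e12 e21 f12 f21 a1 a2 : ℝ,
      0 ≤ e12 ∧ 0 ≤ e21 ∧ e12 + e21 < 1 ∧
      p' = p * (1 - e21) + (1 - p) * e12 ∧
      0 ≤ f12 ∧ 0 ≤ f21 ∧ f12 + f21 < 1 ∧
      p' = p * (1 - f21) + (1 - p) * f12 ∧
      0 ≤ a1 ∧ 0 ≤ a2 ∧
      ((1 - e12) * a1 - e12 * a2) / (1 - e12 - e21)
        > (-e21 * a1 + (1 - e21) * a2) / (1 - e12 - e21) ∧
      ((1 - f12) * a1 - f12 * a2) / (1 - f12 - f21)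
        < (-f21 * a1 + (1 - f21) * a2) / (1 - f12 - f21) := by
  obtain ⟨e12, e21, he1, he2, hes, heq⟩ := hex
  have h1p : (0:ℝ) < 1 - p := by linarith
  -- e12 in terms of e21
  have he12eq : (1 - p) * e12 = p' - p + p * e21 := by linarith [heq]
  have ht : e21 < 1 - p' := by
    by_contra h
    push_neg at h
    nlinarith
  set u : ℝ := (e21 + (1 - p')) / 2 with hu
  have hut : e21 < u := by rw [hu]; linarith
  have hu1 : u < 1 - p' := by rw [hu]; linarith
  have hu0 : 0 ≤ u := by linarith
  set g12 : ℝ := (p' - p + p * u) / (1 - p) with hg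
  have hg12eq : (1 - p) * g12 = p' - p + p * u := by
    rw [hg]; field_simp
  have hg0 : 0 ≤ g12 := by
    rw [hg]
    apply div_nonneg _ (le_of_lt h1p)
    nlinarith
  have hgsum : g12 + u < 1 := by nlinarith
  have hgeq : p' = p * (1 - u) + (1 - p) * g12 := by
    rw [hg12eq]; ring
  -- difference of d's
  have hdiff : (g12 - u) - (e12 - e21) = (2*p - 1) * (u - e21) / (1 - p) := by
    field_simp
    nlinarith [he12eq, hg12eq]
  rcases lt_or_gt_of_ne hpne with hlt | hgt
  · -- p < 1/2 : g-pair has smaller d, use it as the e-pair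
    have hdlt : g12 - u < e12 - e21 := by
      have : (2*p - 1) * (u - e21) / (1 - p) < 0 := by
        apply div_neg_of_neg_of_pos _ h1p
        nlinarith
      linarith [hdiff]
    obtain ⟨a1, a2, ha1, ha2, hi1, hi2⟩ :=
      noniden_helper g12 u e12 e21 hg0 hu0 hgsum he1 he2 hes hdlt
    exact ⟨g12, u, e12, e21, a1, a2, hg0, hu0, hgsum, hgeq, he1, he2, hes, heq,
      ha1, ha2, hi1, hi2⟩
  · have hdlt : e12 - e21 < g12 - u := by
      have : 0 < (2*p - 1) * (u - e21) / (1 - p) := by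
        apply div_pos _ h1p
        nlinarith
      linarith [hdiff]
    obtain ⟨a1, a2, ha1, ha2, hi1, hi2⟩ :=
      noniden_helper e12 e21 g12 u he1 he2 hes hg0 hu0 hgsum hdlt
    exact ⟨e12, e21, g12, u, a1, a2, he1, he2, hes, heq, hg0, hu0, hgsum, hgeq,
      ha1, ha2, hi1, hi2⟩
end

section
/- Let p, p' ∈ ℝ^K be probability vectors with all entries positive. Then there exists a matrix E ∈ ℝ^{K×K} such that: (1) all entries of E are nonnegative, (2) every column of E sums to 1, (3) det(E) > 0, and (4) Ep = p'. -/
open Matrix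

theorem stochastic_matrix_existence
    (K : ℕ) (p p' : Fin K → ℝ)
    (hp0 : ∀ k, 0 < p k) (hp1 : ∑ k, p k = 1)
    (hp'0 : ∀ k, 0 < p' k) (hp'1 : ∑ k, p' k = 1) :
    ∃ E : Matrix (Fin K) (Fin K) ℝ,
      (∀ i j, 0 ≤ E i j) ∧ (∀ j, ∑ i, E i j = 1) ∧ 0 < E.det ∧ E.mulVec p = p' := by
  rcases Nat.eq_zero_or_pos K with hK | hK
  · subst hK
    refine ⟨1, ?_, ?_, ?_, ?_⟩
    · intro i; exact i.elim0
    · intro j; exact j.elim0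
    · simp [Matrix.det_one]
    · funext i; exact i.elim0
  -- K ≥ 1
  have hne : Nonempty (Fin K) := ⟨⟨0, hK⟩⟩
  obtain ⟨i₀, -, hi₀⟩ := Finset.exists_min_image Finset.univ p' ⟨⟨0, hK⟩, Finset.mem_univ _⟩
  set ε : ℝ := p' i₀ with hε
  have hε0 : 0 < ε := hp'0 i₀
  have hεle : ∀ i, ε ≤ p' i := fun i => hi₀ i (Finset.mem_univ i)
  have hple : ∀ i, p i ≤ 1 := by
    intro i
    rw [← hp1]
    exact Finset.single_le_sum (fun k _ => (hp0 k).le) (Finset.mem_univ i)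
  have hkey : ∀ i, ε * p i ≤ p' i := fun i =>
    le_trans (by nlinarith [hp0 i, hple i]) (hεle i)
  set w : Fin K → ℝ := fun i => (p' i - ε * p i) / ε with hw
  set E : Matrix (Fin K) (Fin K) ℝ :=
    ε • ((1 : Matrix (Fin K) (Fin K) ℝ) + replicateCol Unit w * replicateRow Unit (fun _ => (1:ℝ))) with hE
  have hEij : ∀ i j, E i j = (if i = j then ε else 0) + (p' i - ε * p i) := by
    intro i j
    simp only [hE, Matrix.smul_apply, Matrix.add_apply, Matrix.one_apply, Matrix.mul_apply,
      Finset.univ_unique, Finset.sum_singleton, Matrix.replicateCol_apply, Matrix.replicateRow_apply, hw,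
      smul_eq_mul]
    rw [mul_add]
    congr 1
    · by_cases h : i = j <;> simp [h]
    · rw [mul_one, mul_comm, div_mul_cancel₀ _ (ne_of_gt hε0)]
  refine ⟨E, ?_, ?_, ?_, ?_⟩
  · intro i j
    rw [hEij]
    by_cases h : i = j
    · subst h; have := hkey i; simp; linarith
    · simp [h]; linarith [hkey i]
  · intro j
    simp only [hEij]
    rw [Finset.sum_add_distrib]
    rw [Finset.sum_ite_eq' Finset.univ j (fun _ => ε)]
    simp [Finset.sum_sub_distrib, hp'1, ← Finset.mul_sum, hp1]
  · have hdet : E.det = ε ^ K * (1 + (fun _ : Fin K => (1:ℝ)) ⬝ᵥ w) := by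
      rw [hE, Matrix.det_smul, Matrix.det_one_add_replicateCol_mul_replicateRow, Fintype.card_fin]
    rw [hdet]
    have hsum : (fun _ : Fin K => (1:ℝ)) ⬝ᵥ w = (1 - ε) / ε := by
      simp only [dotProduct, hw, one_mul]
      rw [← Finset.sum_div, Finset.sum_sub_distrib, hp'1, ← Finset.mul_sum, hp1, mul_one]
    rw [hsum]
    have : 1 + (1 - ε) / ε = 1 / ε := by field_simp; ring
    rw [this]
    positivity
  · funext i
    simp only [Matrix.mulVec, dotProduct]
    simp only [hEij]
    rw [Finset.sum_congr rfl (fun j _ => add_mul _ _ _), Finset.sum_add_distrib]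
    have h1 : ∑ j, (if i = j then ε else 0) * p j = ε * p i := by
      simp only [ite_mul, zero_mul]
      rw [Finset.sum_ite_eq]
      simp
    have h2 : ∑ j, (p' i - ε * p i) * p j = p' i - ε * p i := by
      rw [← Finset.mul_sum, hp1, mul_one]
    rw [h1, h2]; ring
end

section
/- Let p, p' ∈ ℝ^K be probability vectors with positive entries, sorted so that p'-p is decreasing, and let K₁ = max{k : p_k ≤ p'_k}. Define the upper-triangular matrix Ẽ by Ẽ_{ii} = 1 for i ≤ K₁, Ẽ_{ii} = p'_i/p_i for i ≥ K₁+1, Ẽ_{ij} = (p'_i - p_i)(p_j - p'_j)/(p_j · ∑_{k=1}^{K₁}(p'_k - p_k)) for i ≤ K₁ < j, and Ẽ_{ij} = 0 otherwise. Then Ẽ has nonnegative entries, each column of Ẽ sums to 1, det(Ẽ) = ∏_{i>K₁} p'_i/p_i > 0, and Ẽp = p'. -/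
open Matrix

theorem explicit_stochastic_matrix
    (K K₁ : ℕ) (p p' : Fin K → ℝ)
    (hp0 : ∀ k, 0 < p k) (hp1 : ∑ k, p k = 1)
    (hp'0 : ∀ k, 0 < p' k) (hp'1 : ∑ k, p' k = 1)
    (hsorted : Antitone (fun k => p' k - p k))
    (hK₁ : ∀ k : Fin K, k.val < K₁ ↔ p k ≤ p' k)
    (E : Matrix (Fin K) (Fin K) ℝ)
    (hE : ∀ i j, E i j =
      if i = j ∧ i.val < K₁ then 1
      else if i = j then p' i / p i
      else if i.val < K₁ ∧ K₁ ≤ j.val then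
        (p' i - p i) * (p j - p' j)
          / (p j * ∑ k ∈ Finset.univ.filter (fun k : Fin K => k.val < K₁), (p' k - p k))
      else 0) :
    (∀ i j, 0 ≤ E i j) ∧
    (∀ j, ∑ i, E i j = 1) ∧
    E.det = ∏ i ∈ Finset.univ.filter (fun i : Fin K => K₁ ≤ i.val), p' i / p i ∧
    0 < E.det ∧
    E.mulVec p = p' := by
  classical
  set S := ∑ k ∈ Finset.univ.filter (fun k : Fin K => k.val < K₁), (p' k - p k) with hSdef
  have hAle : ∀ k : Fin K, k.val < K₁ → p k ≤ p' k := fun k hk => (hK₁ k).mp hk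
  have hB : ∀ k : Fin K, K₁ ≤ k.val → p' k < p k := by
    intro k hk
    by_contra h
    push_neg at h
    exact absurd ((hK₁ k).mpr h) (by omega)
  have hsum0 : ∑ k, (p' k - p k) = 0 := by
    rw [Finset.sum_sub_distrib, hp'1, hp1]; ring
  have hsplit : S + ∑ k ∈ Finset.univ.filter (fun k : Fin K => ¬ k.val < K₁), (p' k - p k) = 0 := by
    rw [hSdef, Finset.sum_filter_add_sum_filter_not]; exact hsum0
  have hSB : S = ∑ k ∈ Finset.univ.filter (fun k : Fin K => ¬ k.val < K₁), (p k - p' k) := by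
    have h1 : ∑ k ∈ Finset.univ.filter (fun k : Fin K => ¬ k.val < K₁), (p k - p' k)
        = - ∑ k ∈ Finset.univ.filter (fun k : Fin K => ¬ k.val < K₁), (p' k - p k) := by
      rw [← Finset.sum_neg_distrib]
      apply Finset.sum_congr rfl
      intro k _
      ring
    linarith
  have hSpos : ∀ j : Fin K, K₁ ≤ j.val → 0 < S := by
    intro j hj
    rw [hSB]
    have hmem : j ∈ Finset.univ.filter (fun k : Fin K => ¬ k.val < K₁) := by
      simp; omega
    have hle : p j - p' j ≤ ∑ k ∈ Finset.univ.filter (fun k : Fin K => ¬ k.val < K₁), (p k - p' k) := by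
      apply Finset.single_le_sum _ hmem
      intro k hk
      simp at hk
      exact le_of_lt (sub_pos.mpr (hB k (by omega)))
    have := sub_pos.mpr (hB j hj)
    linarith
  -- nonnegativity
  have hnonneg : ∀ i j, 0 ≤ E i j := by
    intro i j
    rw [hE]
    split_ifs with h1 h2 h3
    · norm_num
    · exact le_of_lt (div_pos (hp'0 i) (hp0 i))
    · obtain ⟨hi, hj⟩ := h3
      apply div_nonneg
      · exact mul_nonneg (sub_nonneg.mpr (hAle i hi)) (le_of_lt (sub_pos.mpr (hB j hj)))
      · exact mul_nonneg (hp0 j).le (hSpos j hj).le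
    · exact le_refl 0
  -- column sums
  have hcol : ∀ j, ∑ i, E i j = 1 := by
    intro j
    by_cases hj : j.val < K₁
    · have heq : ∀ i, E i j = if i = j then 1 else 0 := by
        intro i
        rw [hE]
        by_cases hij : i = j
        · subst hij; simp [hj]
        · rw [if_neg (by tauto), if_neg hij, if_neg (by omega), if_neg hij]
      simp [heq]
    · have hj' : K₁ ≤ j.val := by omega
      have hS := hSpos j hj'
      rw [← Finset.sum_filter_add_sum_filter_not Finset.univ (fun i : Fin K => i.val < K₁)]
      have h1 : ∑ i ∈ Finset.univ.filter (fun i : Fin K => i.val < K₁), E i j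
          = ∑ i ∈ Finset.univ.filter (fun i : Fin K => i.val < K₁),
              (p' i - p i) * ((p j - p' j) / (p j * S)) := by
        apply Finset.sum_congr rfl
        intro i hi
        simp only [Finset.mem_filter, Finset.mem_univ, true_and] at hi
        have hij : i ≠ j := by intro h; subst h; omega
        rw [hE, if_neg (by tauto), if_neg hij, if_pos ⟨hi, hj'⟩]
        ring
      have h2 : ∑ i ∈ Finset.univ.filter (fun i : Fin K => ¬ i.val < K₁), E i j = p' j / p j := by
        rw [Finset.sum_eq_single j]
        · rw [hE, if_neg (by omega), if_pos rfl]
        · intro i hi hij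
          simp only [Finset.mem_filter, Finset.mem_univ, true_and] at hi
          rw [hE, if_neg (by tauto), if_neg hij, if_neg (by tauto)]
        · intro h
          simp only [Finset.mem_filter, Finset.mem_univ, true_and] at h
          omega
      rw [h1, h2, ← Finset.sum_mul, ← hSdef]
      have hpj := hp0 j
      field_simp
      ring
  -- upper triangular
  have htri : E.BlockTriangular id := by
    intro i j hij
    simp only [id_eq] at hij
    have : ¬ i = j := by intro h; subst h; exact lt_irrefl _ hij
    rw [hE, if_neg (by tauto), if_neg this, if_neg (by
      rintro ⟨h1, h2⟩
      have : j.val < i.val := hij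
      omega)]
  have hdiag : ∀ i : Fin K, E i i = if i.val < K₁ then 1 else p' i / p i := by
    intro i
    rw [hE]
    by_cases hi : i.val < K₁
    · simp [hi]
    · simp [hi]
  have hdet : E.det = ∏ i ∈ Finset.univ.filter (fun i : Fin K => K₁ ≤ i.val), p' i / p i := by
    rw [Matrix.det_of_upperTriangular htri]
    rw [← Finset.prod_filter_mul_prod_filter_not Finset.univ (fun i : Fin K => i.val < K₁)]
    have h1 : ∏ i ∈ Finset.univ.filter (fun i : Fin K => i.val < K₁), E i i = 1 := by
      apply Finset.prod_eq_one
      intro i hi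
      simp only [Finset.mem_filter, Finset.mem_univ, true_and] at hi
      rw [hdiag, if_pos hi]
    have h2 : ∏ i ∈ Finset.univ.filter (fun i : Fin K => ¬ i.val < K₁), E i i
        = ∏ i ∈ Finset.univ.filter (fun i : Fin K => K₁ ≤ i.val), p' i / p i := by
      rw [show (Finset.univ.filter (fun i : Fin K => ¬ i.val < K₁))
          = Finset.univ.filter (fun i : Fin K => K₁ ≤ i.val) by
        apply Finset.filter_congr; intro i _; simp [not_lt]]
      apply Finset.prod_congr rfl
      intro i hi
      simp only [Finset.mem_filter, Finset.mem_univ, true_and] at hi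
      rw [hdiag, if_neg (by omega)]
    rw [h1, h2, one_mul]
  have hdetpos : 0 < E.det := by
    rw [hdet]
    apply Finset.prod_pos
    intro i _
    exact div_pos (hp'0 i) (hp0 i)
  -- mulVec
  have hmv : E.mulVec p = p' := by
    funext i
    simp only [Matrix.mulVec, dotProduct]
    by_cases hi : i.val < K₁
    · rw [← Finset.sum_filter_add_sum_filter_not Finset.univ (fun j : Fin K => j.val < K₁)]
      have h1 : ∑ j ∈ Finset.univ.filter (fun j : Fin K => j.val < K₁), E i j * p j = p i := by
        rw [Finset.sum_eq_single i]
        · rw [hE, if_pos ⟨rfl, hi⟩, one_mul]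
        · intro j hj hij
          simp only [Finset.mem_filter, Finset.mem_univ, true_and] at hj
          have hij' : i ≠ j := fun h => hij h.symm
          rw [hE, if_neg (by tauto), if_neg hij', if_neg (by omega), zero_mul]
        · intro h
          simp only [Finset.mem_filter, Finset.mem_univ, true_and] at h
          omega
      rw [h1]
      by_cases hne : (Finset.univ.filter (fun j : Fin K => ¬ j.val < K₁)).Nonempty
      · obtain ⟨j₀, hj₀⟩ := hne
        simp only [Finset.mem_filter, Finset.mem_univ, true_and] at hj₀
        have hS := hSpos j₀ (by omega)
        have h2 : ∑ j ∈ Finset.univ.filter (fun j : Fin K => ¬ j.val < K₁), E i j * p j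
            = ∑ j ∈ Finset.univ.filter (fun j : Fin K => ¬ j.val < K₁),
                (p' i - p i) / S * (p j - p' j) := by
          apply Finset.sum_congr rfl
          intro j hj
          simp only [Finset.mem_filter, Finset.mem_univ, true_and] at hj
          have hij : i ≠ j := by intro h; subst h; omega
          rw [hE, if_neg (by tauto), if_neg hij, if_pos ⟨hi, by omega⟩]
          have hpj := (hp0 j).ne'
          field_simp
        rw [h2, ← Finset.mul_sum, ← hSB]
        field_simp
        ring
      · rw [Finset.not_nonempty_iff_eq_empty] at hne
        have hS0 : S = 0 := by rw [hSB, hne, Finset.sum_empty]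
        have hsumA : ∑ k ∈ Finset.univ.filter (fun k : Fin K => k.val < K₁), (p' k - p k) = 0 := by
          rw [← hSdef]; exact hS0
        have hi' : p' i - p i = 0 :=
          (Finset.sum_eq_zero_iff_of_nonneg (by
            intro k hk
            simp only [Finset.mem_filter, Finset.mem_univ, true_and] at hk
            exact sub_nonneg.mpr (hAle k hk))).mp hsumA i
            (Finset.mem_filter.mpr ⟨Finset.mem_univ i, hi⟩)
        rw [hne, Finset.sum_empty]
        linarith
    · rw [Finset.sum_eq_single i]
      · rw [hE, if_neg (by tauto), if_pos rfl]
        exact div_mul_cancel₀ _ (hp0 i).ne'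
      · intro j _ hij
        have hij' : i ≠ j := fun h => hij h.symm
        rw [hE, if_neg (by tauto), if_neg hij', if_neg (by tauto), zero_mul]
      · intro h; exact absurd (Finset.mem_univ i) h
  exact ⟨hnonneg, hcol, hdet, hdetpos, hmv⟩
end

section
/- Let {(x_i, y'_i)}_{i=1}^n with y'_i ∈ {0,1}, let ℓ be any loss function, f any classifier, and p_n(y) = (1/n)∑_{i=1}^n 1{y'_i = y}. Then (1/n)∑_{i=1}^n [ℓ(f(x_i), y'_i) - (1/(n(n-1)))∑_{j=1}^n ∑_{k≠j} ℓ(f(x_j), y'_k)] = (1/(n-1))∑_{i=1}^n p_n(1-y'_i)[ℓ(f(x_i), y'_i) - ℓ(f(x_i), 1-y'_i)]. -/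
theorem peer_loss_simplification
    (n : ℕ) (hn : 2 ≤ n) (X : Type*) (x : Fin n → X) (f : X → ℝ)
    (ℓ : ℝ → ℝ → ℝ) (y : Fin n → ℝ) (hy : ∀ i, y i = 0 ∨ y i = 1)
    (pn : ℝ → ℝ) (hpn : ∀ v, pn v = (1 / (n : ℝ)) * ∑ i, if y i = v then 1 else 0) :
    (1 / (n : ℝ)) * ∑ i, (ℓ (f (x i)) (y i)
        - (1 / ((n : ℝ) * ((n : ℝ) - 1)))
            * ∑ j, ∑ k ∈ Finset.univ.erase j, ℓ (f (x j)) (y k))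
      = (1 / ((n : ℝ) - 1))
          * ∑ i, pn (1 - y i) * (ℓ (f (x i)) (y i) - ℓ (f (x i)) (1 - y i)) := by
  have hn2 : (2:ℝ) ≤ (n:ℝ) := by exact_mod_cast hn
  have hn0 : (n:ℝ) ≠ 0 := by linarith
  have hn1 : (n:ℝ) - 1 ≠ 0 := by intro h; linarith
  have hind : ∀ j, (n:ℝ) * pn (y j) = ∑ i, if y i = y j then (1:ℝ) else 0 := by
    intro j; rw [hpn]; field_simp
  have hind' : ∀ j, (n:ℝ) * pn (1 - y j) = ∑ i, if y i = 1 - y j then (1:ℝ) else 0 := by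
    intro j; rw [hpn]; field_simp
  have hne : ∀ j, y j ≠ 1 - y j := by
    intro j; rcases hy j with h | h <;> rw [h] <;> norm_num
  have hpq : ∀ j, pn (y j) + pn (1 - y j) = 1 := by
    intro j
    have h : (n:ℝ) * (pn (y j) + pn (1 - y j)) = (n:ℝ) := by
      rw [mul_add, hind j, hind' j, ← Finset.sum_add_distrib]
      have : ∀ i : Fin n, ((if y i = y j then (1:ℝ) else 0)
          + (if y i = 1 - y j then (1:ℝ) else 0)) = 1 := by
        intro i
        rcases hy i with hi | hi <;> rcases hy j with hj | hj <;>
          simp [hi, hj] <;> norm_num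
      rw [Finset.sum_congr rfl (fun i _ => this i)]
      simp
    have := mul_left_cancel₀ hn0 (h.trans (mul_one (n:ℝ)).symm)
    linarith
  have key : ∀ j, ∑ k ∈ Finset.univ.erase j, ℓ (f (x j)) (y k)
      = ((n:ℝ) * pn (y j) - 1) * ℓ (f (x j)) (y j)
        + (n:ℝ) * pn (1 - y j) * ℓ (f (x j)) (1 - y j) := by
    intro j
    have hterm : ∀ k, ℓ (f (x j)) (y k)
        = (if y k = y j then (1:ℝ) else 0) * ℓ (f (x j)) (y j)
          + (if y k = 1 - y j then (1:ℝ) else 0) * ℓ (f (x j)) (1 - y j) := by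
      intro k
      rcases hy k with hk | hk <;> rcases hy j with hj | hj <;>
        simp [hk, hj] <;> norm_num
    have h1 : ∑ k ∈ Finset.univ.erase j, (if y k = y j then (1:ℝ) else 0)
        = (n:ℝ) * pn (y j) - 1 := by
      have h := Finset.sum_erase_add Finset.univ
        (fun k => if y k = y j then (1:ℝ) else 0) (Finset.mem_univ j)
      simp only [eq_self_iff_true, if_true] at h
      rw [hind j]
      linarith
    have h2 : ∑ k ∈ Finset.univ.erase j, (if y k = 1 - y j then (1:ℝ) else 0)
        = (n:ℝ) * pn (1 - y j) := by
      have h := Finset.sum_erase_add Finset.univ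
        (fun k => if y k = 1 - y j then (1:ℝ) else 0) (Finset.mem_univ j)
      simp only [if_neg (hne j)] at h
      rw [hind' j]
      linarith
    calc ∑ k ∈ Finset.univ.erase j, ℓ (f (x j)) (y k)
        = ∑ k ∈ Finset.univ.erase j, ((if y k = y j then (1:ℝ) else 0) * ℓ (f (x j)) (y j)
          + (if y k = 1 - y j then (1:ℝ) else 0) * ℓ (f (x j)) (1 - y j)) :=
          Finset.sum_congr rfl (fun k _ => hterm k)
      _ = (∑ k ∈ Finset.univ.erase j, if y k = y j then (1:ℝ) else 0) * ℓ (f (x j)) (y j)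
          + (∑ k ∈ Finset.univ.erase j, if y k = 1 - y j then (1:ℝ) else 0)
            * ℓ (f (x j)) (1 - y j) := by
          rw [Finset.sum_add_distrib, Finset.sum_mul, Finset.sum_mul]
      _ = _ := by rw [h1, h2]
  simp only [key]
  have hT : (∑ j, (((n:ℝ) * pn (y j) - 1) * ℓ (f (x j)) (y j)
        + (n:ℝ) * pn (1 - y j) * ℓ (f (x j)) (1 - y j)))
      = ((n:ℝ) - 1) * ∑ j, ℓ (f (x j)) (y j)
        - (n:ℝ) * ∑ j, pn (1 - y j) * (ℓ (f (x j)) (y j) - ℓ (f (x j)) (1 - y j)) := by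
    rw [Finset.mul_sum, Finset.mul_sum, ← Finset.sum_sub_distrib]
    apply Finset.sum_congr rfl
    intro j _
    linear_combination ((n:ℝ) * ℓ (f (x j)) (y j)) * (hpq j)
  rw [Finset.sum_sub_distrib, Finset.sum_const, Finset.card_univ, Fintype.card_fin,
    nsmul_eq_mul, hT]
  field_simp
  ring
end

section
/- Let Y, Y' ∈ {0,1}, P(Y=1) = 1/2, noise rates e₀ = P(Y'=1|Y=0), e₁ = P(Y'=0|Y=1) with e₀ + e₁ < 1, and X ⊥ Y' | Y. Let p' = P(Y'=1), and define for each x: a_y(x) = p(x|Y=y)·P(Y=y) and α_y(x) = q(x|Y'=y)·Q(Y'=y), where q(x,y,y') = p(x,y,y')/(2P(Y'=y')). Then α₁(x) - α₀(x) = ((a₁(x) - a₀(x))/2) · (1-e₁-e₀)/((1-e₁+e₀)(1-e₀+e₁)). In particular, α₁(x) ≥ α₀(x) if and only if a₁(x) ≥ a₀(x). -/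
theorem reweighted_posterior_difference
    (e0 e1 : ℝ) (he0 : 0 ≤ e0) (he1 : 0 ≤ e1) (hsum : e0 + e1 < 1)
    (p' : ℝ) (hp' : p' = (1/2) * (1 - e1) + (1/2) * e0)
    (a0 a1 : ℝ) (ha0 : 0 ≤ a0) (ha1 : 0 ≤ a1)
    (α0 α1 : ℝ)
    (hα1 : α1 = a1 * (1 - e1) / (4 * p') + a0 * e0 / (4 * p'))
    (hα0 : α0 = a1 * e1 / (4 * (1 - p')) + a0 * (1 - e0) / (4 * (1 - p'))) :
    α1 - α0 = ((a1 - a0) / 2)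
        * ((1 - e1 - e0) / ((1 - e1 + e0) * (1 - e0 + e1))) ∧
    (α1 ≥ α0 ↔ a1 ≥ a0) := by
  have h1 : (0:ℝ) < 1 - e1 + e0 := by linarith
  have h2 : (0:ℝ) < 1 - e0 + e1 := by linarith
  have h3 : (0:ℝ) < 1 - e1 - e0 := by linarith
  have hp0 : p' ≠ 0 := by rw [hp']; intro h; linarith
  have hp1 : 1 - p' ≠ 0 := by rw [hp']; intro h; linarith
  have e4p : 4 * p' = 2 * (1 - e1 + e0) := by rw [hp']; ring
  have e4q : 4 * (1 - p') = 2 * (1 - e0 + e1) := by rw [hp']; ring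
  have key : α1 - α0 = ((a1 - a0) / 2)
      * ((1 - e1 - e0) / ((1 - e1 + e0) * (1 - e0 + e1))) := by
    rw [hα1, hα0, e4p, e4q]
    field_simp
    ring
  refine ⟨key, ?_⟩
  constructor
  · intro h
    have := sub_nonneg.mpr h
    rw [key] at this
    have hpos : (0:ℝ) < (1 - e1 - e0) / ((1 - e1 + e0) * (1 - e0 + e1)) :=
      div_pos h3 (mul_pos h1 h2)
    nlinarith [mul_pos hpos hpos]
  · intro h
    have : 0 ≤ α1 - α0 := by
      rw [key]
      apply mul_nonneg (by linarith) (le_of_lt (div_pos h3 (mul_pos h1 h2)))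
    linarith
end

section
/- Let Y, Y' ∈ {0,1} with P(Y=1) = 1/2, instance-independent noise rates e₀ + e₁ < 1, 𝓕 the set of all (measurable) binary classifiers on 𝒳, ℓ the 0-1 loss, and p'(y) = P(Y'=y). Then the Bayes classifier for the clean label, f*_P(x) = argmax_y P(Y=y|X=x), minimizes the weighted noisy risk: f*_P ∈ argmin_{f ∈ 𝓕} E_P[p'(1-Y')·1{f(X) ≠ Y'}], and any minimizer agrees with f*_P almost everywhere (on the set where the clean posterior is not exactly 1/2). -/
open MeasureTheory

theorem weighted_erm_recovers_bayes
    {𝒳 : Type*} [MeasurableSpace 𝒳] (μ : Measure 𝒳)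
    (pX : Bool → 𝒳 → ℝ)
    (hmeas : ∀ y, Measurable (pX y)) (hnn : ∀ y x, 0 ≤ pX y x)
    (hint : ∀ y, Integrable (pX y) μ) (hnorm : ∀ y, ∫ x, pX y x ∂μ = 1)
    (e0 e1 : ℝ) (he0 : 0 ≤ e0) (he1 : 0 ≤ e1) (hsum : e0 + e1 < 1)
    (ε : Bool → Bool → ℝ)
    (hε : ∀ y' y, ε y' y = if y then (if y' then 1 - e1 else e1)
                           else (if y' then e0 else 1 - e0))
    (p' : Bool → ℝ) (hp' : ∀ y', p' y' = (1/2) * ε y' true + (1/2) * ε y' false)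
    (R : (𝒳 → Bool) → ℝ)
    (hR : ∀ f, R f = ∑ y' : Bool, p' (!y') *
        ∫ x, (if f x = y' then (0:ℝ) else 1)
          * ((1/2) * (pX true x * ε y' true + pX false x * ε y' false)) ∂μ)
    (fstar : 𝒳 → Bool)
    (hfstar : ∀ x, fstar x = if pX false x ≤ pX true x then true else false) :
    (∀ f : 𝒳 → Bool, Measurable f → R fstar ≤ R f) ∧
    (∀ f : 𝒳 → Bool, Measurable f → R f ≤ R fstar →
      ∀ᵐ x ∂μ, pX true x ≠ pX false x → f x = fstar x) := by
  classical
  -- local weight functions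
  set a : 𝒳 → ℝ := fun x =>
    p' false * ((1/2) * (pX true x * ε true true + pX false x * ε true false)) with ha
  set b : 𝒳 → ℝ := fun x =>
    p' true * ((1/2) * (pX true x * ε false true + pX false x * ε false false)) with hb
  have hWint : ∀ y' : Bool, Integrable
      (fun x => (1/2) * (pX true x * ε y' true + pX false x * ε y' false)) μ := by
    intro y'
    exact (((hint true).mul_const _).add ((hint false).mul_const _)).const_mul _
  have hind : ∀ (g : 𝒳 → ℝ), Integrable g μ → ∀ (f : 𝒳 → Bool) (y' : Bool),
      Measurable f →
      Integrable (fun x => (if f x = y' then (0:ℝ) else 1) * g x) μ := by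
    intro g hg f y' hf
    have heq : (fun x => (if f x = y' then (0:ℝ) else 1) * g x)
        = Set.indicator (f ⁻¹' {y'})ᶜ g := by
      funext x
      by_cases h : f x = y' <;> simp [Set.indicator, h]
    rw [heq]
    exact hg.indicator (hf (MeasurableSet.singleton y')).compl
  have hmfstar : Measurable fstar := by
    have : fstar = fun x => if pX false x ≤ pX true x then true else false := by
      funext x; exact hfstar x
    rw [this]
    exact Measurable.ite (measurableSet_le (hmeas false) (hmeas true))
      measurable_const measurable_const
  have haint : Integrable a μ := ((hWint true).const_mul _)
  have hbint : Integrable b μ := ((hWint false).const_mul _)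
  -- the risk as a single integral
  have hRe : ∀ f : 𝒳 → Bool, Measurable f →
      R f = ∫ x, (if f x then b x else a x) ∂μ := by
    intro f hf
    rw [hR, Fintype.sum_bool]
    simp only [Bool.not_true, Bool.not_false]
    rw [← integral_const_mul, ← integral_const_mul,
      ← integral_add ((hind _ (hWint true) f true hf).const_mul _)
        ((hind _ (hWint false) f false hf).const_mul _)]
    refine integral_congr_ae (Filter.Eventually.of_forall fun x => ?_)
    cases hfx : f x <;> simp [hfx, ha, hb]
  have hkeyint : ∀ f : 𝒳 → Bool, Measurable f →
      Integrable (fun x => if f x then b x else a x) μ := by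
    intro f hf
    have heq : (fun x => if f x then b x else a x)
        = fun x => (if f x = false then (0:ℝ) else 1) * b x
            + (if f x = true then (0:ℝ) else 1) * a x := by
      funext x; cases hfx : f x <;> simp [hfx]
    rw [heq]
    exact (hind _ hbint f false hf).add (hind _ haint f true hf)
  -- difference formula
  have hab : ∀ x, a x - b x = ((1 - e0 - e1)/4) * (pX true x - pX false x) := by
    intro x
    simp [ha, hb, hp', hε]
    ring
  have hc : 0 < (1 - e0 - e1)/4 := by linarith
  -- pointwise optimality of fstar
  have hopt : ∀ (f : 𝒳 → Bool) (x : 𝒳),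
      (if fstar x then b x else a x) ≤ (if f x then b x else a x) := by
    intro f x
    have h := hab x
    rw [hfstar x]
    by_cases hle : pX false x ≤ pX true x
    · have hba : b x ≤ a x := by nlinarith
      simp only [hle, if_true]
      cases f x <;> simp [hba]
    · have hab' : a x ≤ b x := by
        push_neg at hle
        nlinarith
      simp only [hle, if_false]
      cases f x <;> simp [hab']
  constructor
  · intro f hf
    rw [hRe fstar hmfstar, hRe f hf]
    exact integral_mono (hkeyint fstar hmfstar) (hkeyint f hf) (hopt f)
  · intro f hf hle
    have hdiffint : Integrable
        (fun x => (if f x then b x else a x) - (if fstar x then b x else a x)) μ :=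
      (hkeyint f hf).sub (hkeyint fstar hmfstar)
    have hnonneg : ∀ x, 0 ≤ (if f x then b x else a x) - (if fstar x then b x else a x) :=
      fun x => sub_nonneg.mpr (hopt f x)
    have hint0 : ∫ x, ((if f x then b x else a x) - (if fstar x then b x else a x)) ∂μ = 0 := by
      have h1 : ∫ x, ((if f x then b x else a x) - (if fstar x then b x else a x)) ∂μ
          = R f - R fstar := by
        rw [integral_sub (hkeyint f hf) (hkeyint fstar hmfstar), hRe f hf, hRe fstar hmfstar]
      have h2 : 0 ≤ ∫ x, ((if f x then b x else a x) - (if fstar x then b x else a x)) ∂μ :=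
        integral_nonneg hnonneg
      rw [h1] at h2 ⊢
      linarith
    have hae : ∀ᵐ x ∂μ,
        (if f x then b x else a x) - (if fstar x then b x else a x) = 0 := by
      have := (integral_eq_zero_iff_of_nonneg hnonneg hdiffint).mp hint0
      filter_upwards [this] with x hx
      exact hx
    filter_upwards [hae] with x hx hne
    by_contra hfx
    have h := hab x
    by_cases hle' : pX false x ≤ pX true x
    · have hfs : fstar x = true := by rw [hfstar x, if_pos hle']
      have hfxt : f x = false := by
        cases hft : f x
        · rfl
        · exact absurd (hft.trans hfs.symm) hfx
      rw [hfxt, hfs] at hx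
      simp only [if_true, if_false, Bool.false_eq_true] at hx
      have hlt : pX false x < pX true x := lt_of_le_of_ne hle' (Ne.symm hne)
      nlinarith
    · have hfs : fstar x = false := by rw [hfstar x, if_neg hle']
      have hfxt : f x = true := by
        cases hft : f x
        · exact absurd (hft.trans hfs.symm) hfx
        · rfl
      rw [hfxt, hfs] at hx
      simp only [if_true, if_false, Bool.false_eq_true] at hx
      push_neg at hle'
      nlinarith
end

section
/- Let K = 2 and p = (1/2, 1/2). For any two column-stochastic 2×2 matrices E, Ẽ with positive determinant, any noisy marginal p' with Ep = Ẽp = p', and any a₁, a₂ ≥ 0 (not both zero), the vectors α = E⁻¹(a₁,a₂)ᵀ and α̃ = Ẽ⁻¹(a₁,a₂)ᵀ satisfy: α₁ ≥ α₂ if and only if α̃₁ ≥ α̃₂. -/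
open Matrix

lemma key_identifiability
    (E : Matrix (Fin 2) (Fin 2) ℝ) (hdet : 0 < E.det)
    (p' : Fin 2 → ℝ) (hEp : E.mulVec (fun _ => 1/2) = p')
    (a : Fin 2 → ℝ) :
    (E⁻¹.mulVec a 0 ≥ E⁻¹.mulVec a 1 ↔ p' 1 * a 0 ≥ p' 0 * a 1) := by
  have h0 : p' 0 = E 0 0 * (1/2) + E 0 1 * (1/2) := by
    rw [← hEp]; simp [Matrix.mulVec, dotProduct, Fin.sum_univ_two]
  have h1 : p' 1 = E 1 0 * (1/2) + E 1 1 * (1/2) := by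
    rw [← hEp]; simp [Matrix.mulVec, dotProduct, Fin.sum_univ_two]
  have hinv : E⁻¹ = E.det⁻¹ • E.adjugate := by rw [Matrix.inv_def, Ring.inverse_eq_inv]
  have hadj : E.adjugate = !![E 1 1, -E 0 1; -E 1 0, E 0 0] := Matrix.adjugate_fin_two E
  have e0 : E⁻¹.mulVec a 0 = E.det⁻¹ * (E 1 1 * a 0 + -E 0 1 * a 1) := by
    rw [hinv, hadj]
    simp [Matrix.mulVec, dotProduct, Fin.sum_univ_two, mul_add]; ring
  have e1 : E⁻¹.mulVec a 1 = E.det⁻¹ * (-E 1 0 * a 0 + E 0 0 * a 1) := by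
    rw [hinv, hadj]
    simp [Matrix.mulVec, dotProduct, Fin.sum_univ_two, mul_add]; ring
  rw [e0, e1, ge_iff_le, mul_le_mul_iff_right₀ (by positivity), h0, h1]
  constructor <;> intro h <;> nlinarith

theorem balanced_binary_identifiability
    (E F : Matrix (Fin 2) (Fin 2) ℝ)
    (hEnn : ∀ i j, 0 ≤ E i j) (hEcol : ∀ j, ∑ i, E i j = 1) (hEdet : 0 < E.det)
    (hFnn : ∀ i j, 0 ≤ F i j) (hFcol : ∀ j, ∑ i, F i j = 1) (hFdet : 0 < F.det)
    (p p' : Fin 2 → ℝ) (hp : p = fun _ => 1/2)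
    (hEp : E.mulVec p = p') (hFp : F.mulVec p = p')
    (a : Fin 2 → ℝ) (ha0 : ∀ i, 0 ≤ a i) (hane : a ≠ 0) :
    (E⁻¹.mulVec a 0 ≥ E⁻¹.mulVec a 1 ↔ F⁻¹.mulVec a 0 ≥ F⁻¹.mulVec a 1) := by
  subst hp
  rw [key_identifiability E hEdet p' hEp a, key_identifiability F hFdet p' hFp a]
end
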